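/- arXiv:1803.00495 — 4 statements merged into one kernel-verified Lean document; each statement's English description precedes it below -/
import Mathlib

section
/- Let q ≥ 3 be an integer and let a be a complex number with real part Re(a) ≥ 1. The function s ↦ Σ_{p | q} (log p)/(p^{s+a} − 1), where p runs over the prime divisors of q, is analytic on the disc |s| < 1/2, and for every integer n ≥ 0 its n-th Taylor coefficient F_{n,a} at the origin satisfies |F_{n,a}| ≤ A_n (log q)² / log log q, where A_n > 0 depends only on n. -/
/-!
On the closed disc `|s| ≤ 1/2` we have `Re (s + a) ≥ 1/2`, so for every prime `p` the denominator
satisfies `|p^(s+a) - 1| ≥ √2 - 1 > 2/5`; hence the sum is holomorphic there and bounded by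
`(5/2) Σ_{p ∣ q} log p ≤ (5/2) log q`. Cauchy's estimate on the circle of radius `1/2` bounds the
`n`-th Taylor coefficient by `(5/2) 2ⁿ log q`, and `log q ≤ (log q)² / log log q` once `log q > 1`.
-/

open Complex Metric

namespace Complex

lemma one_lt_norm_natCast_cpow {p : ℕ} (hp : 1 < p) {z : ℂ} (hz : 0 < z.re) :
    1 < ‖(p : ℂ) ^ z‖ := by
  rw [norm_natCast_cpow_of_pos (by omega)]
  exact Real.one_lt_rpow (by exact_mod_cast hp) hz

lemma natCast_cpow_sub_one_ne_zero {p : ℕ} (hp : 1 < p) {z : ℂ} (hz : 0 < z.re) :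
    (p : ℂ) ^ z - 1 ≠ 0 := by
  intro h
  simpa [sub_eq_zero.mp h] using one_lt_norm_natCast_cpow hp hz

lemma two_fifths_le_norm_natCast_cpow_sub_one {p : ℕ} (hp : 2 ≤ p) {z : ℂ}
    (hz : 1 / 2 ≤ z.re) : 2 / 5 ≤ ‖(p : ℂ) ^ z - 1‖ := by
  have hsqrt : 7 / 5 ≤ Real.sqrt 2 := Real.le_sqrt_of_sq_le (by norm_num)
  have hpow : Real.sqrt 2 ≤ (p : ℝ) ^ z.re :=
    calc Real.sqrt 2 = (2 : ℝ) ^ (1 / 2 : ℝ) := Real.sqrt_eq_rpow 2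
      _ ≤ (p : ℝ) ^ (1 / 2 : ℝ) :=
        Real.rpow_le_rpow (by norm_num) (by exact_mod_cast hp) (by norm_num)
      _ ≤ (p : ℝ) ^ z.re :=
        Real.rpow_le_rpow_of_exponent_le (by exact_mod_cast hp.trans' one_le_two) hz
  have := norm_sub_norm_le ((p : ℂ) ^ z) 1
  rw [norm_natCast_cpow_of_pos (by omega), norm_one] at this
  linarith

lemma norm_iteratedDeriv_div_factorial_le {f : ℂ → ℂ} {c : ℂ} {R C : ℝ} (n : ℕ) (hR : 0 < R)
    (hf : DiffContOnCl ℂ f (ball c R)) (hC : ∀ z ∈ sphere c R, ‖f z‖ ≤ C) :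
    ‖iteratedDeriv n f c / n.factorial‖ ≤ C / R ^ n := by
  have hfac : (0 : ℝ) < n.factorial := by exact_mod_cast n.factorial_pos
  rw [norm_div, norm_natCast, div_le_iff₀ hfac, div_mul_eq_mul_div, mul_comm]
  exact norm_iteratedDeriv_le_of_forall_mem_sphere_norm_le n hR hf hC

end Complex

lemma Nat.sum_log_primeFactors_le (n : ℕ) : ∑ p ∈ n.primeFactors, Real.log p ≤ Real.log n := by
  rcases n.eq_zero_or_pos with rfl | hn
  · simp
  rw [← Real.log_prod fun p hp ↦ by exact_mod_cast (Nat.prime_of_mem_primeFactors hp).ne_zero]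
  have hprod : (0 : ℝ) < ∏ p ∈ n.primeFactors, (p : ℝ) :=
    Finset.prod_pos fun p hp ↦ by exact_mod_cast (Nat.prime_of_mem_primeFactors hp).pos
  refine Real.log_le_log hprod ?_
  rw [← Nat.cast_prod]
  exact_mod_cast Nat.le_of_dvd hn n.prod_primeFactors_dvd

lemma Real.one_lt_log_of_three_le {x : ℝ} (hx : 3 ≤ x) : 1 < Real.log x := by
  rw [Real.lt_log_iff_exp_lt (by linarith)]
  linarith [Real.exp_one_lt_three]

lemma Real.le_sq_div_log {x : ℝ} (hx : 1 < x) : x ≤ x ^ 2 / Real.log x := by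
  rw [le_div_iff₀ (Real.log_pos hx), sq]
  exact mul_le_mul_of_nonneg_left (Real.log_le_self (by linarith)) (by linarith)

noncomputable def primeLogSum (q : ℕ) (a s : ℂ) : ℂ :=
  ∑ p ∈ q.primeFactors, (Real.log p : ℂ) / ((p : ℂ) ^ (s + a) - 1)

section primeLogSum

variable (q : ℕ) (a : ℂ)

lemma differentiableOn_primeLogSum :
    DifferentiableOn ℂ (primeLogSum q a) {s | 0 < (s + a).re} := by
  intro s hs
  refine (DifferentiableAt.fun_sum fun p hp ↦ ?_).differentiableWithinAt
  have hp := (Nat.prime_of_mem_primeFactors hp).one_lt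
  have hp0 : (p : ℂ) ≠ 0 := by exact_mod_cast (by omega : p ≠ 0)
  refine (differentiableAt_const _).div ?_ (natCast_cpow_sub_one_ne_zero hp hs)
  exact ((differentiableAt_id.add_const a).const_cpow (Or.inl hp0)).sub_const 1

lemma norm_primeLogSum_le {s : ℂ} (hs : 1 / 2 ≤ (s + a).re) :
    ‖primeLogSum q a s‖ ≤ 5 / 2 * Real.log q := by
  calc ‖primeLogSum q a s‖
      ≤ ∑ p ∈ q.primeFactors, ‖(Real.log p : ℂ) / ((p : ℂ) ^ (s + a) - 1)‖ := norm_sum_le _ _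
    _ ≤ ∑ p ∈ q.primeFactors, 5 / 2 * Real.log p := by
      refine Finset.sum_le_sum fun p hp ↦ ?_
      have hp := (Nat.prime_of_mem_primeFactors hp).two_le
      have hlog : 0 ≤ Real.log p := Real.log_nonneg (by exact_mod_cast hp.trans' one_le_two)
      have hden := two_fifths_le_norm_natCast_cpow_sub_one hp hs
      rw [norm_div, norm_real, Real.norm_of_nonneg hlog, div_le_iff₀ (by linarith)]
      nlinarith
    _ = 5 / 2 * ∑ p ∈ q.primeFactors, Real.log p := (Finset.mul_sum ..).symm
    _ ≤ 5 / 2 * Real.log q := by gcongr; exact q.sum_log_primeFactors_le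

end primeLogSum

lemma half_le_re_add_of_mem_closedBall {a s : ℂ} (ha : 1 ≤ a.re) (hs : s ∈ closedBall 0 (1 / 2)) :
    1 / 2 ≤ (s + a).re := by
  have := neg_abs_le s.re
  have := abs_re_le_norm s
  rw [mem_closedBall_zero_iff] at hs
  rw [add_re]
  linarith

/-- For an integer `q ≥ 3` and `a : ℂ` with `Re a ≥ 1`, the function
`s ↦ Σ_{p | q} (log p)/(p^{s+a} − 1)` (the sum over the distinct prime divisors of `q`) is
analytic on the disc `|s| < 1/2`, and for every `n ≥ 0` its `n`-th Taylor coefficient `F_{n,a}`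
at `0` satisfies `|F_{n,a}| ≤ A_n (log q)²/log log q`, with `A_n > 0` depending only on `n`. -/
theorem stmt_8 (n : ℕ) :
    ∃ A : ℝ, 0 < A ∧ ∀ q : ℕ, 3 ≤ q → ∀ a : ℂ, 1 ≤ a.re →
      (∀ s ∈ Metric.ball (0 : ℂ) (1 / 2),
        AnalyticAt ℂ (fun s : ℂ => ∑ p ∈ q.primeFactors,
          (Real.log p : ℂ) / ((p : ℂ) ^ (s + a) - 1)) s) ∧
      ‖iteratedDeriv n (fun s : ℂ => ∑ p ∈ q.primeFactors,
            (Real.log p : ℂ) / ((p : ℂ) ^ (s + a) - 1)) 0 / (n.factorial : ℂ)‖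
        ≤ A * (Real.log q) ^ 2 / Real.log (Real.log q) := by
  refine ⟨5 / 2 * 2 ^ n, by positivity, fun q hq a ha ↦ ?_⟩
  have hdisc : closedBall (0 : ℂ) (1 / 2) ⊆ {s | 0 < (s + a).re} := fun s hs ↦
    (half_le_re_add_of_mem_closedBall ha hs).trans_lt' one_half_pos
  refine ⟨fun s hs ↦ (differentiableOn_primeLogSum q a).analyticAt ?_, ?_⟩
  · exact (isOpen_lt continuous_const (by fun_prop)).mem_nhds (hdisc (ball_subset_closedBall hs))
  have hlogq : 1 < Real.log q := Real.one_lt_log_of_three_le (by exact_mod_cast hq)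
  calc ‖iteratedDeriv n (primeLogSum q a) 0 / n.factorial‖
      ≤ 5 / 2 * Real.log q / (1 / 2) ^ n :=
        norm_iteratedDeriv_div_factorial_le n one_half_pos
          ((differentiableOn_primeLogSum q a).diffContOnCl_ball hdisc)
          fun s hs ↦ norm_primeLogSum_le q a
            (half_le_re_add_of_mem_closedBall ha (sphere_subset_closedBall hs))
    _ = 5 / 2 * 2 ^ n * Real.log q := by rw [one_div, inv_pow, div_inv_eq_mul]; ring
    _ ≤ 5 / 2 * 2 ^ n * (Real.log q ^ 2 / Real.log (Real.log q)) := by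
        gcongr; exact Real.le_sq_div_log hlogq
    _ = _ := by ring
end

section
/- Let q ≥ 3 be an integer, let χ_1 be a non-principal real Dirichlet character modulo q, and let β_1 be a real simple zero of L(s, χ_1). Let A > 0 and let c_2 > 0 be such that L(s, χ_1) has no zero other than β_1 in the disc |s − β_1| ≤ c_2/log(2q) and such that |L'(s, χ_1)/L(s, χ_1) − 1/(s − β_1)| ≤ A·log(2q) for all s on the circle |s − β_1| = c_2/log(2q). Then L'(s+β_1, χ_1)/L(s+β_1, χ_1) = 1/s + Σ_{n≥0} P_n s^n for |s| < c_2/log(2q), and the coefficients satisfy |P_n| ≤ B_n (log q)^{n+1} for every n ≥ 0, where B_n > 0 depends only on n, A and c_2. -/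
open Complex DirichletCharacter

/-!
Writing `L(s) = (s - β₁) h(s)` with `h = dslope L β₁`, the function `L'/L - 1/(s - β₁)` is the
logarithmic derivative `h'/h`. Since `β₁` is a simple zero and the only zero of `L` in the closed
disc of radius `r = c₂/log(2q)`, `h` does not vanish there, so `h'/h` is holomorphic on that disc.
Cauchy's estimate on the boundary circle, where `|h'/h| ≤ A log(2q)`, bounds its `n`-th Taylor
coefficient by `A log(2q) / rⁿ = A log(2q)^{n+1} / c₂ⁿ ≤ (2^{n+1} A / c₂ⁿ) (log q)^{n+1}`.
-/

open Metric Nat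

section DSlope

variable {𝕜 : Type*} [NontriviallyNormedField 𝕜] {f : 𝕜 → 𝕜} {a z : 𝕜}

theorem eq_sub_mul_dslope (hfa : f a = 0) : f = fun z ↦ (z - a) * dslope f a z := by
  funext z
  simpa [hfa, smul_eq_mul] using (sub_smul_dslope f a z).symm

theorem dslope_ne_zero_of_simple_zero (hfa : f a = 0) (hf' : deriv f a ≠ 0)
    (hz : f z = 0 → z = a) : dslope f a z ≠ 0 := by
  rcases eq_or_ne z a with rfl | hza
  · rwa [dslope_same]
  · intro h0
    exact hza (hz (by rw [eq_sub_mul_dslope hfa]; simp [h0]))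

theorem logDeriv_dslope_of_ne (hfa : f a = 0) (hza : z ≠ a) (hfz : f z ≠ 0)
    (hf : DifferentiableAt 𝕜 f z) : logDeriv (dslope f a) z = logDeriv f z - 1 / (z - a) := by
  have hza' : z - a ≠ 0 := sub_ne_zero.mpr hza
  have hdslope : dslope f a z ≠ 0 := by
    intro h0
    exact hfz (by rw [eq_sub_mul_dslope hfa]; simp [h0])
  have hlog_sub : logDeriv (fun z ↦ z - a) z = 1 / (z - a) := by
    simp [logDeriv_apply]
  rw [eq_sub_mul_dslope hfa, logDeriv_mul z hza' hdslope (by fun_prop)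
    ((differentiableAt_dslope_of_ne hza).mpr hf), hlog_sub, ← eq_sub_mul_dslope hfa]
  ring

end DSlope

theorem differentiableOn_logDeriv_dslope {f : ℂ → ℂ} {a : ℂ} {s : Set ℂ}
    (hf : Differentiable ℂ f) (hfa : f a = 0) (hf' : deriv f a ≠ 0)
    (hs : ∀ z ∈ s, f z = 0 → z = a) :
    DifferentiableOn ℂ (logDeriv (dslope f a)) s := by
  have hh : Differentiable ℂ (dslope f a) :=
    differentiableOn_univ.mp ((differentiableOn_dslope Filter.univ_mem).mpr hf.differentiableOn)
  intro z hz
  exact (hh.deriv z).div (hh z) (dslope_ne_zero_of_simple_zero hfa hf' (hs z hz))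
    |>.differentiableWithinAt

section Cauchy

variable {f : ℂ → ℂ} {c : ℂ} {R C : ℝ}

theorem hasSum_taylorCoeff_mul_pow (hf : DifferentiableOn ℂ f (ball c R)) {s : ℂ}
    (hs : ‖s‖ < R) : HasSum (fun n ↦ (n ! : ℂ)⁻¹ * iteratedDeriv n f c * s ^ n) (f (c + s)) := by
  have h := Complex.hasSum_taylorSeries_on_ball hf (z := c + s) (by simpa using hs)
  simp only [add_sub_cancel_left, smul_eq_mul, mul_left_comm _ (s ^ _)] at h
  simpa only [mul_comm _ (s ^ _)] using h

theorem norm_taylorCoeff_le (hR : 0 < R) (hf : DifferentiableOn ℂ f (closedBall c R))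
    (hC : ∀ z ∈ sphere c R, ‖f z‖ ≤ C) (n : ℕ) :
    ‖(n ! : ℂ)⁻¹ * iteratedDeriv n f c‖ ≤ C / R ^ n := by
  have hcauchy := Complex.norm_iteratedDeriv_le_of_forall_mem_sphere_norm_le n hR
    (hf.diffContOnCl_ball subset_rfl) hC
  rw [norm_mul, norm_inv, Complex.norm_natCast, inv_mul_le_iff₀ (by positivity)]
  exact hcauchy.trans_eq (by ring)

end Cauchy

theorem Real.log_two_mul_le_two_mul_log {x : ℝ} (hx : 2 ≤ x) :
    Real.log (2 * x) ≤ 2 * Real.log x := by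
  rw [Real.log_mul two_ne_zero (by positivity)]
  linarith [Real.log_le_log two_pos hx]

/-- Let `A, c₂ > 0`. There are constants `B_n > 0`, depending only on `n`, `A` and `c₂`, with
the following property. Let `q ≥ 3`, let `χ₁` be a non-principal real Dirichlet character mod
`q`, and let `β₁` be a real simple zero of `L(s,χ₁)`. Assume `L(s,χ₁)` has no zero other than
`β₁` in the disc `|s − β₁| ≤ c₂/log(2q)` and `|L'/L(s,χ₁) − 1/(s−β₁)| ≤ A log(2q)` on the
circle `|s − β₁| = c₂/log(2q)`. Then `L'/L(s+β₁,χ₁) = 1/s + Σ_{n≥0} P_n sⁿ` for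
`0 < |s| < c₂/log(2q)`, with `|P_n| ≤ B_n (log q)^{n+1}` for every `n`. -/
theorem stmt_9 (A c₂ : ℝ) (hA : 0 < A) (hc₂ : 0 < c₂) :
    ∃ B : ℕ → ℝ, (∀ n, 0 < B n) ∧
      ∀ (q : ℕ) [NeZero q], 3 ≤ q →
        ∀ χ₁ : DirichletCharacter ℂ q, χ₁ ≠ 1 → (∀ x : ZMod q, (χ₁ x).im = 0) →
          ∀ β₁ : ℝ,
            LFunction χ₁ (β₁ : ℂ) = 0 → deriv (LFunction χ₁) (β₁ : ℂ) ≠ 0 →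
            (∀ s : ℂ, ‖s - (β₁ : ℂ)‖ ≤ c₂ / Real.log (2 * q) → LFunction χ₁ s = 0 →
              s = (β₁ : ℂ)) →
            (∀ s : ℂ, ‖s - (β₁ : ℂ)‖ = c₂ / Real.log (2 * q) →
              ‖deriv (LFunction χ₁) s / LFunction χ₁ s - 1 / (s - (β₁ : ℂ))‖
                ≤ A * Real.log (2 * q)) →
            ∃ P : ℕ → ℂ,
              (∀ s : ℂ, s ≠ 0 → ‖s‖ < c₂ / Real.log (2 * q) →
                HasSum (fun n : ℕ => P n * s ^ n)
                  (deriv (LFunction χ₁) (s + β₁) / LFunction χ₁ (s + β₁) - 1 / s)) ∧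
              ∀ n : ℕ, ‖P n‖ ≤ B n * (Real.log q) ^ (n + 1) := by
  refine ⟨fun n ↦ A * 2 ^ (n + 1) / c₂ ^ n, fun n ↦ by positivity, ?_⟩
  intro q _ hq χ₁ hχ₁ _ β₁ hzero hsimple hisolated hcircle
  set L := LFunction χ₁
  have hL : Differentiable ℂ L := differentiable_LFunction hχ₁
  have hlog : 0 < Real.log (2 * q) := Real.log_pos (by norm_cast; omega)
  set r := c₂ / Real.log (2 * q)
  set G := logDeriv (dslope L β₁)
  have hG : DifferentiableOn ℂ G (closedBall (β₁ : ℂ) r) :=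
    differentiableOn_logDeriv_dslope hL hzero hsimple fun s hs ↦
      hisolated s (mem_closedBall_iff_norm.mp hs)
  have hG_eq : ∀ z ∈ closedBall (β₁ : ℂ) r, z ≠ β₁ →
      G z = deriv L z / L z - 1 / (z - β₁) := fun z hz hne ↦
    logDeriv_dslope_of_ne hzero hne (fun h ↦ hne (hisolated z (mem_closedBall_iff_norm.mp hz) h))
      (hL z)
  refine ⟨fun n ↦ (n ! : ℂ)⁻¹ * iteratedDeriv n G β₁, fun s hs0 hsr ↦ ?_, fun n ↦ ?_⟩
  · have hmem : s + β₁ ∈ closedBall (β₁ : ℂ) r := by simpa using hsr.le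
    have hG_shift := hG_eq _ hmem (by simpa using hs0)
    rw [add_sub_cancel_right] at hG_shift
    rw [← hG_shift, add_comm]
    exact hasSum_taylorCoeff_mul_pow (hG.mono ball_subset_closedBall) hsr
  · have hbound := norm_taylorCoeff_le (by positivity) hG (fun z hz ↦ by
      rw [hG_eq z (sphere_subset_closedBall hz) (ne_of_mem_sphere hz (by positivity))]
      exact hcircle z (mem_sphere_iff_norm.mp hz)) n
    refine hbound.trans ?_
    have hlog2 : Real.log (2 * q) ≤ 2 * Real.log q :=
      Real.log_two_mul_le_two_mul_log (by norm_cast; omega)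
    calc A * Real.log (2 * q) / r ^ n = A / c₂ ^ n * Real.log (2 * q) ^ (n + 1) := by
          simp only [r]; rw [div_pow, pow_succ]; field_simp
      _ ≤ A / c₂ ^ n * (2 * Real.log q) ^ (n + 1) := by gcongr
      _ = A * 2 ^ (n + 1) / c₂ ^ n * Real.log q ^ (n + 1) := by ring
end

section
/- There is an absolute constant C > 0 such that for every positive integer k, M_k := Σ_{m ≥ 1} Λ_k(m)² / m² ≤ C · (2k)!. -/
/-!
Since `∑_{d ∣ m} Λ(d) = log m`, induction on `k` gives `Λ_k(m) ≤ (log m)^k`, so it suffices to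
bound `∑ (log m)^n / m²` with `n = 2k`. After the substitution `x = log t` this sum is a Riemann
sum for `∫_0^∞ e^{-x} x^n dx = Γ(n + 1) = n!`: on `[log m, log (m + 1)]`, an interval of length
at least `1 / (m + 1)`, the integrand is at least `(log m)^n / (m + 1)`, and `(m + 1)² ≤ 4m²`.
Hence `C = 4` works.
-/

/-- `Lam k m` is the `k`-fold Dirichlet convolution of the von Mangoldt function with itself,
evaluated at `m`, i.e. `Λ_k(m) = Σ_{m = m₁⋯m_k} Λ(m₁)⋯Λ(m_k)`. -/
noncomputable def Lam (k m : ℕ) : ℝ := (ArithmeticFunction.vonMangoldt ^ k) m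

open Real MeasureTheory Set
open ArithmeticFunction (vonMangoldt_nonneg vonMangoldt_sum mul_apply one_apply)
open scoped ArithmeticFunction.vonMangoldt Nat

lemma Lam_nonneg (k m : ℕ) : 0 ≤ Lam k m := by
  induction k generalizing m with
  | zero =>
    rw [Lam, pow_zero, one_apply]
    split_ifs <;> norm_num
  | succ k ih =>
    rw [Lam, pow_succ, mul_apply]
    exact Finset.sum_nonneg fun p _ => mul_nonneg (ih p.1) vonMangoldt_nonneg

lemma Lam_le_log_pow (k m : ℕ) : Lam k m ≤ log m ^ k := by
  induction k generalizing m with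
  | zero =>
    rw [Lam, pow_zero, pow_zero, one_apply]
    split_ifs <;> norm_num
  | succ k ih =>
    calc Lam (k + 1) m = ∑ p ∈ m.divisorsAntidiagonal, Lam k p.1 * Λ p.2 := by
          rw [Lam, pow_succ, mul_apply]; rfl
      _ ≤ ∑ p ∈ m.divisorsAntidiagonal, log m ^ k * Λ p.2 := by
          refine Finset.sum_le_sum fun p hp => mul_le_mul_of_nonneg_right ?_ vonMangoldt_nonneg
          have hdiv := Nat.fst_mem_divisors_of_mem_antidiagonal hp
          have hp1 : 0 < p.1 := Nat.pos_of_mem_divisors hdiv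
          have hpm : p.1 ≤ m := Nat.divisor_le hdiv
          refine (ih p.1).trans (pow_le_pow_left₀ (log_natCast_nonneg _) ?_ k)
          exact log_le_log (by exact_mod_cast hp1) (by exact_mod_cast hpm)
      _ = log m ^ (k + 1) := by
          rw [← Finset.mul_sum, Nat.sum_divisorsAntidiagonal' (f := fun _ y => Λ y),
            vonMangoldt_sum, pow_succ]

lemma integral_exp_neg_mul_pow (n : ℕ) :
    ∫ x in Ioi (0 : ℝ), exp (-x) * x ^ n = n ! := by
  rw [← Gamma_nat_eq_factorial, Gamma_eq_integral (by positivity)]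
  simp [← rpow_natCast]

lemma inv_add_one_le_log_add_one_sub_log {x : ℝ} (hx : 0 < x) :
    (x + 1)⁻¹ ≤ log (x + 1) - log x := by
  have h := one_sub_inv_le_log_of_pos (show 0 < (x + 1) / x by positivity)
  rw [log_div (by positivity) hx.ne', inv_div] at h
  calc (x + 1)⁻¹ = 1 - x / (x + 1) := by field_simp; ring
    _ ≤ _ := h

lemma log_pow_div_sq_le_four_mul_integral (n m : ℕ) :
    log m ^ n / (m : ℝ) ^ 2 ≤ 4 * ∫ x in log m..log (m + 1 : ℕ), exp (-x) * x ^ n := by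
  rcases m.eq_zero_or_pos with rfl | hm_pos
  · simp
  have hm : (1 : ℝ) ≤ m := by exact_mod_cast hm_pos
  push_cast
  set a := log m
  set b := log (m + 1)
  have hab : a ≤ b := log_le_log (by positivity) (by linarith)
  have hgap : ((m : ℝ) + 1)⁻¹ ≤ b - a := inv_add_one_le_log_add_one_sub_log (by positivity)
  have hlower : ∀ x ∈ Icc a b, a ^ n / (m + 1) ≤ exp (-x) * x ^ n := by
    intro x ⟨hax, hxb⟩
    have hexp : ((m : ℝ) + 1)⁻¹ ≤ exp (-x) := by
      rw [exp_neg]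
      exact inv_anti₀ (exp_pos x) ((exp_le_exp.mpr hxb).trans_eq (exp_log (by positivity)))
    rw [div_eq_inv_mul]
    exact mul_le_mul hexp (pow_le_pow_left₀ (log_natCast_nonneg m) hax n) (by positivity)
      (exp_pos _).le
  have hintegral : (b - a) * (a ^ n / (m + 1)) ≤ ∫ x in a..b, exp (-x) * x ^ n := by
    rw [← smul_eq_mul, ← intervalIntegral.integral_const]
    exact intervalIntegral.integral_mono_on hab intervalIntegrable_const
      (by apply Continuous.intervalIntegrable; fun_prop) hlower
  have ha : 0 ≤ a ^ n := pow_nonneg (log_natCast_nonneg m) n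
  calc a ^ n / (m : ℝ) ^ 2 ≤ 4 * ((m + 1 : ℝ)⁻¹ * (a ^ n / (m + 1))) := by
        have hsq : ((m : ℝ) + 1) ^ 2 ≤ 4 * (m : ℝ) ^ 2 := by nlinarith
        rw [div_le_iff₀ (by positivity)]
        field_simp
        nlinarith [mul_le_mul_of_nonneg_left hsq ha]
    _ ≤ 4 * ((b - a) * (a ^ n / (m + 1))) := by gcongr
    _ ≤ _ := by gcongr

lemma sum_range_log_pow_div_sq_le (n N : ℕ) :
    ∑ m ∈ Finset.range N, log m ^ n / (m : ℝ) ^ 2 ≤ 4 * n ! := by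
  have hg : Continuous fun x : ℝ => exp (-x) * x ^ n := by fun_prop
  calc ∑ m ∈ Finset.range N, log m ^ n / (m : ℝ) ^ 2
      ≤ ∑ m ∈ Finset.range N, 4 * ∫ x in log m..log (m + 1 : ℕ), exp (-x) * x ^ n :=
        Finset.sum_le_sum fun m _ => log_pow_div_sq_le_four_mul_integral n m
    _ = 4 * ∫ x in (0 : ℝ)..log N, exp (-x) * x ^ n := by
        rw [← Finset.mul_sum, intervalIntegral.sum_integral_adjacent_intervals
          fun _ _ => hg.intervalIntegrable _ _]
        simp
    _ ≤ 4 * ∫ x in Ioi (0 : ℝ), exp (-x) * x ^ n := by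
        rw [intervalIntegral.integral_of_le (log_natCast_nonneg N)]
        refine mul_le_mul_of_nonneg_left (setIntegral_mono_set ?_ ?_
          Ioc_subset_Ioi_self.eventuallyLE) zero_le_four
        · exact .of_integral_ne_zero (by rw [integral_exp_neg_mul_pow]; positivity)
        · filter_upwards [ae_restrict_mem measurableSet_Ioi] with x (hx : 0 < x)
          positivity
    _ = 4 * n ! := by rw [integral_exp_neg_mul_pow]

/-- There is an absolute constant `C > 0` such that for every positive integer `k`,
`M_k := Σ_{m ≥ 1} Λ_k(m)² / m² ≤ C · (2k)!`. -/
theorem stmt_15 :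
    ∃ C : ℝ, 0 < C ∧ ∀ k : ℕ, 0 < k →
      (∑' m : ℕ, (Lam k m) ^ 2 / (m : ℝ) ^ 2) ≤ C * Nat.factorial (2 * k) := by
  refine ⟨4, by norm_num, fun k _ =>
    Real.tsum_le_of_sum_range_le (fun m => by positivity) fun N => ?_⟩
  calc ∑ m ∈ Finset.range N, Lam k m ^ 2 / (m : ℝ) ^ 2
      ≤ ∑ m ∈ Finset.range N, log m ^ (2 * k) / (m : ℝ) ^ 2 := by
        refine Finset.sum_le_sum fun m _ => div_le_div_of_nonneg_right ?_ (by positivity)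
        rw [mul_comm, pow_mul]
        exact pow_le_pow_left₀ (Lam_nonneg k m) (Lam_le_log_pow k m) 2
    _ ≤ 4 * (2 * k)! := sum_range_log_pow_div_sq_le (2 * k) N
end

section
/- Define M_k = Σ_{m ≥ 1} Λ_k(m)² / m² for each positive integer k. Then M_k > 0 for every k ≥ 1 and the series Σ_{k ≥ 1} M_k^{−1/(2k)} diverges (Carleman's condition holds for the moment sequence (M_k)). -/
/-!
Since `∑_{d ∣ m} Λ(d) = log m`, induction on `k` gives `Λ_k(m) ≤ (log m)^k`, and
`log m ≤ 4k · m^{1/(4k)}` turns this into `Λ_k(m)² / m² ≤ (4k)^{2k} m^{-3/2}`. Hence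
`M_k ≤ (4k)^{2k} ζ(3/2) ≤ (4 ζ(3/2) k)^{2k}`, so `M_k^{-1/(2k)} ≥ 1 / (4 ζ(3/2) k)` and the
series dominates the harmonic series. Positivity comes from `Λ_k(2^k) ≥ (log 2)^k > 0`.
-/

open ArithmeticFunction

/-- `Mmom k = Σ_{m ≥ 1} Λ_k(m)² / m²`. -/
noncomputable def Mmom (k : ℕ) : ℝ := ∑' m : ℕ, (Lam k m) ^ 2 / (m : ℝ) ^ 2

namespace ArithmeticFunction

variable {R : Type*} [CommSemiring R] [PartialOrder R] [IsOrderedRing R] {f : ArithmeticFunction R}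

theorem pow_apply_nonneg (hf : ∀ n, 0 ≤ f n) (k n : ℕ) : 0 ≤ (f ^ k) n := by
  induction k generalizing n with
  | zero =>
    rw [pow_zero, one_apply]
    split_ifs <;> simp
  | succ k ih =>
    rw [pow_succ, mul_apply]
    exact Finset.sum_nonneg fun x _ => mul_nonneg (ih x.1) (hf x.2)

theorem apply_pow_le_pow_apply_pow (hf : ∀ n, 0 ≤ f n) (k n : ℕ) :
    f n ^ k ≤ (f ^ k) (n ^ k) := by
  induction k with
  | zero => simp
  | succ k ih =>
    rcases eq_or_ne n 0 with rfl | hn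
    · simp
    have hmem : (n ^ k, n) ∈ (n ^ (k + 1)).divisorsAntidiagonal := by
      simp [Nat.mem_divisorsAntidiagonal, pow_succ, hn]
    calc f n ^ (k + 1) = f n ^ k * f n := pow_succ _ _
      _ ≤ (f ^ k) (n ^ k) * f n := mul_le_mul_of_nonneg_right ih (hf n)
      _ ≤ ∑ x ∈ (n ^ (k + 1)).divisorsAntidiagonal, (f ^ k) x.1 * f x.2 :=
        Finset.single_le_sum (f := fun x : ℕ × ℕ => (f ^ k) x.1 * f x.2)
          (fun x _ => mul_nonneg (pow_apply_nonneg hf k x.1) (hf x.2)) hmem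
      _ = (f ^ (k + 1)) (n ^ (k + 1)) := by rw [pow_succ f, mul_apply]

theorem vonMangoldt_pow_apply_two_pow_pos (k : ℕ) : 0 < (Λ ^ k) (2 ^ k) := by
  have hΛ2 : 0 < Λ 2 := by
    rw [vonMangoldt_apply_prime Nat.prime_two]
    exact Real.log_pos one_lt_two
  exact (pow_pos hΛ2 k).trans_le (apply_pow_le_pow_apply_pow (fun _ => vonMangoldt_nonneg) k 2)

theorem vonMangoldt_pow_apply_le_log_pow (k m : ℕ) : (Λ ^ k) m ≤ Real.log m ^ k := by
  induction k generalizing m with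
  | zero =>
    rw [pow_zero, one_apply]
    split_ifs <;> simp
  | succ k ih =>
    rcases Nat.eq_zero_or_pos m with rfl | hm
    · simp
    rw [pow_succ, mul_apply]
    calc ∑ x ∈ m.divisorsAntidiagonal, (Λ ^ k) x.1 * Λ x.2
        ≤ ∑ x ∈ m.divisorsAntidiagonal, Real.log m ^ k * Λ x.2 := by
          refine Finset.sum_le_sum fun x hx => mul_le_mul_of_nonneg_right ?_ vonMangoldt_nonneg
          have hdvd : x.1 ∣ m :=
            Nat.dvd_of_mem_divisors (Nat.fst_mem_divisors_of_mem_antidiagonal hx)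
          have hx1 : 0 < x.1 := Nat.pos_of_dvd_of_pos hdvd hm
          refine (ih x.1).trans (pow_le_pow_left₀ (Real.log_natCast_nonneg _) ?_ k)
          exact Real.log_le_log (mod_cast hx1) (mod_cast Nat.le_of_dvd hm hdvd)
      _ = Real.log m ^ (k + 1) := by
          rw [← Finset.mul_sum, Nat.sum_divisorsAntidiagonal' (f := fun _ b => Λ b),
            vonMangoldt_sum, pow_succ]

end ArithmeticFunction

theorem Real.log_pow_le_div_pow_mul_rpow {x ε : ℝ} (hx : 1 ≤ x) (hε : 0 < ε) (n : ℕ) :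
    Real.log x ^ n ≤ (n / ε) ^ n * x ^ ε := by
  rcases eq_or_ne n 0 with rfl | hn
  · simpa using Real.one_le_rpow hx hε.le
  have hεn : 0 < ε / n := by positivity
  calc Real.log x ^ n ≤ (x ^ (ε / n) / (ε / n)) ^ n :=
        pow_le_pow_left₀ (Real.log_nonneg hx) (Real.log_le_rpow_div (by linarith) hεn) n
    _ = (n / ε) ^ n * x ^ ε := by
        rw [div_eq_mul_inv, mul_pow, inv_div, ← Real.rpow_mul_natCast (by linarith),
          div_mul_cancel₀ _ (by exact_mod_cast hn), mul_comm]

theorem Real.inv_le_rpow_neg_one_div_of_le_pow {x y : ℝ} {n : ℕ} (hx : 0 < x) (hy : 0 ≤ y)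
    (hn : n ≠ 0) (h : x ≤ y ^ n) : y⁻¹ ≤ x ^ (-(1 / (n : ℝ))) := by
  rw [Real.rpow_neg hx.le, one_div]
  refine inv_anti₀ (by positivity) ?_
  calc x ^ (n⁻¹ : ℝ) ≤ (y ^ n) ^ (n⁻¹ : ℝ) := Real.rpow_le_rpow hx.le h (by positivity)
    _ = y := Real.pow_rpow_inv_natCast hy hn

theorem not_summable_rpow_neg_of_le_mul_pow {M : ℕ → ℝ} {c : ℝ} (hc : 0 < c)
    (hpos : ∀ k, 0 < M (k + 1))
    (hle : ∀ k : ℕ, M (k + 1) ≤ (c * ((k : ℝ) + 1)) ^ (2 * (k + 1))) :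
    ¬ Summable (fun k : ℕ => M (k + 1) ^ (-(1 / (2 * ((k : ℝ) + 1))))) := by
  intro hsum
  have hlower (k : ℕ) :
      c⁻¹ * ((k : ℝ) + 1)⁻¹ ≤ M (k + 1) ^ (-(1 / (2 * ((k : ℝ) + 1)))) := by
    have := Real.inv_le_rpow_neg_one_div_of_le_pow (hpos k) (by positivity) (by positivity) (hle k)
    rwa [mul_inv, Nat.cast_mul, Nat.cast_ofNat, Nat.cast_succ] at this
  have hharmonic : Summable (fun k : ℕ => ((k : ℝ) + 1)⁻¹) :=
    (summable_mul_left_iff (inv_ne_zero hc.ne')).mp <|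
      .of_nonneg_of_le (fun _ => by positivity) hlower hsum
  exact Real.not_summable_natCast_inv ((summable_nat_add_iff 1).mp (by exact_mod_cast hharmonic))

theorem Lam_sq_div_sq_le (k m : ℕ) :
    Lam k m ^ 2 / (m : ℝ) ^ 2 ≤ (4 * k : ℝ) ^ (2 * k) * (m : ℝ) ^ (-(3 / 2) : ℝ) := by
  rcases eq_or_ne m 0 with rfl | hm
  · simp
  have hm1 : (1 : ℝ) ≤ m := by exact_mod_cast Nat.one_le_iff_ne_zero.mpr hm
  calc Lam k m ^ 2 / (m : ℝ) ^ 2 ≤ Real.log m ^ (2 * k) / (m : ℝ) ^ 2 := by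
        rw [pow_mul']
        gcongr
        · exact pow_apply_nonneg (fun _ => vonMangoldt_nonneg) k m
        · exact vonMangoldt_pow_apply_le_log_pow k m
    _ ≤ (4 * k : ℝ) ^ (2 * k) * (m : ℝ) ^ (1 / 2 : ℝ) / (m : ℝ) ^ 2 := by
        gcongr
        have h := Real.log_pow_le_div_pow_mul_rpow hm1 one_half_pos (2 * k)
        rwa [show ((2 * k : ℕ) : ℝ) / (1 / 2) = 4 * k by push_cast; ring] at h
    _ = (4 * k : ℝ) ^ (2 * k) * (m : ℝ) ^ (-(3 / 2) : ℝ) := by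
        rw [mul_div_assoc, ← Real.rpow_sub_natCast (by positivity)]
        norm_num

theorem summable_Lam_sq_div_sq (k : ℕ) : Summable (fun m : ℕ => Lam k m ^ 2 / (m : ℝ) ^ 2) :=
  .of_nonneg_of_le (fun _ => by positivity) (Lam_sq_div_sq_le k)
    ((Real.summable_nat_rpow.mpr (by norm_num)).mul_left _)

theorem Mmom_pos (k : ℕ) : 0 < Mmom k := by
  have hterm : 0 < Lam k (2 ^ k) ^ 2 / ((2 ^ k : ℕ) : ℝ) ^ 2 := by
    have := vonMangoldt_pow_apply_two_pow_pos k
    unfold Lam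
    positivity
  exact hterm.trans_le ((summable_Lam_sq_div_sq k).le_tsum (2 ^ k) fun _ _ => by positivity)

theorem exists_Mmom_le_mul_pow : ∃ c > 0, ∀ k ≠ 0, Mmom k ≤ (c * k) ^ (2 * k) := by
  set C := ∑' m : ℕ, (m : ℝ) ^ (-(3 / 2) : ℝ)
  have hsum : Summable (fun m : ℕ => (m : ℝ) ^ (-(3 / 2) : ℝ)) :=
    Real.summable_nat_rpow.mpr (by norm_num)
  have hC : 1 ≤ C := by simpa using hsum.le_tsum 1 fun _ _ => by positivity
  refine ⟨4 * C, by positivity, fun k hk => ?_⟩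
  calc Mmom k ≤ (4 * k : ℝ) ^ (2 * k) * C := by
        rw [← tsum_mul_left]
        exact (summable_Lam_sq_div_sq k).tsum_le_tsum (Lam_sq_div_sq_le k) (hsum.mul_left _)
    _ ≤ (4 * k : ℝ) ^ (2 * k) * C ^ (2 * k) := by
        gcongr
        exact le_self_pow₀ hC (by positivity)
    _ = (4 * C * k) ^ (2 * k) := by ring

/-- `M_k > 0` for every `k ≥ 1` and the series `Σ_{k ≥ 1} M_k^{-1/(2k)}` diverges
(Carleman's condition holds for the moment sequence `(M_k)`). -/
theorem stmt_16 :
    (∀ k : ℕ, 0 < k → 0 < Mmom k) ∧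
      ¬ Summable (fun k : ℕ => Mmom (k + 1) ^ (-(1 / (2 * ((k : ℝ) + 1))))) := by
  obtain ⟨c, hc, hle⟩ := exists_Mmom_le_mul_pow
  refine ⟨fun k _ => Mmom_pos k, not_summable_rpow_neg_of_le_mul_pow hc (fun _ => Mmom_pos _) ?_⟩
  exact fun k => mod_cast hle (k + 1) k.succ_ne_zero
end
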